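/- Under the reformulation, the projection onto the x-variables of the feasible set of the reformulated problem equals the feasible set of the original problem: {x : ∃ y, Ax + (I−P)y + b ≤ 0 and Ex + (I−P')y' + g = 0 for appropriate components y, y'} = {x : 1ᵀ(Ax+b) ≤ 0 and 1ᵀ(Ex+g) = 0}, when P and P' are symmetric doubly stochastic matrices with connected graphs and positive diagonals. -/

import Mathlib

/-!
For a symmetric doubly stochastic `P` whose graph is connected, the range of `I - P` is exactly
the hyperplane `1ᵀ c = 0`. One inclusion holds because `1ᵀ (I - P) = 0`. For the other, a vector
fixed by `P` is constant: at a maximum `yᵢ = ∑ⱼ Pᵢⱼ yⱼ` forces `yⱼ = yᵢ` whenever `Pᵢⱼ > 0`, and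
this propagates along the connected graph. So `ker (I - P)` is the line of constants and, by
rank–nullity, the range of `I - P` has codimension one. Hence the equality constraint can be met by
some `y'` iff `1ᵀ (E x + g) = 0`, and the inequality by some `y` iff `1ᵀ (A x + b) ≤ 0`, choosing
`(I - P) y = s/n · 1 - (A x + b)` with `s = 1ᵀ (A x + b)`.
-/

open Matrix Finset

/-- The undirected graph associated with a nonnegative matrix `P`. -/
def assocGraph {n : ℕ} (P : Matrix (Fin n) (Fin n) ℝ) : SimpleGraph (Fin n) where
  Adj i j := i ≠ j ∧ (0 < P i j ∨ 0 < P j i)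
  symm := ⟨by intro i j h; exact ⟨h.1.symm, h.2.symm⟩⟩
  loopless := ⟨by intro i h; exact h.1 rfl⟩

namespace Matrix

section Stochastic

variable {ι : Type*} [Fintype ι] [DecidableEq ι] {P : Matrix ι ι ℝ}

lemma mem_doublyStochastic_of_isSymm (hsymm : P.IsSymm) (hnonneg : ∀ i j, 0 ≤ P i j)
    (hrow : ∀ i, ∑ j, P i j = 1) : P ∈ doublyStochastic ℝ ι :=
  mem_doublyStochastic_iff_sum.2
    ⟨hnonneg, hrow, fun j => by simpa only [hsymm.apply] using hrow j⟩

lemma sum_one_sub_mulVec_eq_zero (hP : P ∈ colStochastic ℝ ι) (y : ι → ℝ) :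
    ∑ i, ((1 - P) *ᵥ y) i = 0 := by
  simp only [sub_mulVec, one_mulVec, Pi.sub_apply, sum_sub_distrib,
    sum_mulVec_of_mem_colStochastic hP, sub_self]

lemma apply_eq_of_mulVec_eq_self_of_forall_le (hP : P ∈ rowStochastic ℝ ι) {y : ι → ℝ}
    (hy : P *ᵥ y = y) {i j : ι} (hmax : ∀ k, y k ≤ y i) (hij : 0 < P i j) : y j = y i := by
  have hsum : ∑ k, P i k * (y i - y k) = 0 := by
    have hyi := congrFun hy i
    simp only [mulVec, dotProduct] at hyi
    simp only [mul_sub, sum_sub_distrib, ← sum_mul, sum_row_of_mem_rowStochastic hP, one_mul, hyi,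
      sub_self]
  have hterm := (sum_eq_zero_iff_of_nonneg fun k _ =>
    mul_nonneg (nonneg_of_mem_rowStochastic hP) (sub_nonneg.2 (hmax k))).1 hsum j (mem_univ j)
  linarith [(mul_eq_zero.1 hterm).resolve_left hij.ne']

lemma range_mulVecLin_one_sub_eq_ker_one_dotProduct [Nonempty ι] (hP : P ∈ colStochastic ℝ ι)
    (hker : LinearMap.ker (1 - P).mulVecLin ≤ ℝ ∙ 1) :
    LinearMap.range (1 - P).mulVecLin = LinearMap.ker (dotProductEquiv ℝ ι 1) := by
  have hle : LinearMap.range (1 - P).mulVecLin ≤ LinearMap.ker (dotProductEquiv ℝ ι 1) := by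
    rintro _ ⟨y, rfl⟩
    rw [LinearMap.mem_ker, dotProductEquiv_apply_apply, one_dotProduct, mulVecLin_apply]
    exact sum_one_sub_mulVec_eq_zero hP y
  have hone : (1 : ι → ℝ) ≠ 0 := one_ne_zero
  have hker_dim : Module.finrank ℝ (LinearMap.ker (1 - P).mulVecLin) ≤ 1 :=
    (Submodule.finrank_mono hker).trans (finrank_span_singleton hone).le
  have hrank := (1 - P).mulVecLin.finrank_range_add_finrank_ker
  have hhyperplane := Module.Dual.finrank_ker_add_one_of_ne_zero
    ((dotProductEquiv ℝ ι).map_ne_zero_iff.2 hone)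
  exact Submodule.eq_of_le_of_finrank_le hle (by omega)

end Stochastic

section AssocGraph

variable {n : ℕ} {P : Matrix (Fin n) (Fin n) ℝ}

lemma ker_mulVecLin_one_sub_le_span_one (hsymm : P.IsSymm) (hP : P ∈ rowStochastic ℝ (Fin n))
    (hconn : (assocGraph P).Connected) : LinearMap.ker (1 - P).mulVecLin ≤ ℝ ∙ 1 := by
  intro y hy
  have hfix : P *ᵥ y = y := by
    rw [LinearMap.mem_ker, mulVecLin_apply, sub_mulVec, one_mulVec, sub_eq_zero] at hy
    exact hy.symm
  have := hconn.nonempty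
  obtain ⟨i₀, hmax⟩ := Finite.exists_max y
  have hpropagate : ∀ {i j}, (assocGraph P).Adj i j → y i = y i₀ → y j = y i₀ := by
    intro i j hadj hi
    have hij : 0 < P i j := hadj.2.elim id fun h => hsymm.apply i j ▸ h
    rw [apply_eq_of_mulVec_eq_self_of_forall_le hP hfix (fun k => hi ▸ hmax k) hij, hi]
  have hconst : ∀ j, y j = y i₀ := by
    intro j
    induction (SimpleGraph.reachable_iff_reflTransGen _ _).1 (hconn.preconnected i₀ j) with
    | refl => rfl
    | tail _ hadj ih => exact hpropagate hadj ih
  refine Submodule.mem_span_singleton.2 ⟨y i₀, funext fun j => ?_⟩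
  simp [hconst j]

lemma exists_one_sub_mulVec_eq_iff (hsymm : P.IsSymm) (hP : P ∈ doublyStochastic ℝ (Fin n))
    (hconn : (assocGraph P).Connected) {c : Fin n → ℝ} :
    (∃ y, (1 - P) *ᵥ y = c) ↔ ∑ i, c i = 0 := by
  have := hconn.nonempty
  obtain ⟨hProw, hPcol⟩ := mem_doublyStochastic_iff_mem_rowStochastic_and_mem_colStochastic.1 hP
  have hrange := range_mulVecLin_one_sub_eq_ker_one_dotProduct hPcol
    (ker_mulVecLin_one_sub_le_span_one hsymm hProw hconn)
  simpa only [LinearMap.mem_range, mulVecLin_apply, LinearMap.mem_ker, dotProductEquiv_apply_apply,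
    one_dotProduct] using SetLike.ext_iff.1 hrange c

lemma exists_forall_add_one_sub_mulVec_eq_zero_iff (hsymm : P.IsSymm)
    (hP : P ∈ doublyStochastic ℝ (Fin n)) (hconn : (assocGraph P).Connected) {v : Fin n → ℝ} :
    (∃ y, ∀ i, v i + ((1 - P) *ᵥ y) i = 0) ↔ ∑ i, v i = 0 := by
  simpa [funext_iff, eq_neg_iff_add_eq_zero, add_comm] using
    exists_one_sub_mulVec_eq_iff hsymm hP hconn (c := -v)

lemma exists_forall_add_one_sub_mulVec_nonpos_iff (hsymm : P.IsSymm)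
    (hP : P ∈ doublyStochastic ℝ (Fin n)) (hconn : (assocGraph P).Connected) {v : Fin n → ℝ} :
    (∃ y, ∀ i, v i + ((1 - P) *ᵥ y) i ≤ 0) ↔ ∑ i, v i ≤ 0 := by
  constructor
  · rintro ⟨y, hy⟩
    have hsum := sum_nonpos fun i (_ : i ∈ univ) => hy i
    rwa [sum_add_distrib, sum_one_sub_mulVec_eq_zero
      (mem_doublyStochastic_iff_mem_rowStochastic_and_mem_colStochastic.1 hP).2, add_zero] at hsum
  · intro hv
    have hn : (n : ℝ) ≠ 0 := Nat.cast_ne_zero.2 (Fin.pos_iff_nonempty.2 hconn.nonempty).ne'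
    set m := (∑ i, v i) / n
    obtain ⟨y, hy⟩ := (exists_forall_add_one_sub_mulVec_eq_zero_iff hsymm hP hconn
      (v := fun i => v i - m)).2 (by simp [sum_sub_distrib, m, mul_div_cancel₀ _ hn])
    exact ⟨y, fun i => by linarith [hy i, div_nonpos_of_nonpos_of_nonneg hv n.cast_nonneg]⟩

end AssocGraph

end Matrix

theorem projection_of_feasible_set_general
    {n d : ℕ} (P P' : Matrix (Fin n) (Fin n) ℝ)
    (hsymm : P.IsSymm) (hsymm' : P'.IsSymm)
    (hnonneg : ∀ i j, 0 ≤ P i j) (hnonneg' : ∀ i j, 0 ≤ P' i j)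
    (hrow : ∀ i, ∑ j, P i j = 1) (hrow' : ∀ i, ∑ j, P' i j = 1)
    (hconn : (assocGraph P).Connected) (hconn' : (assocGraph P').Connected)
    (A E : Matrix (Fin n) (Fin d) ℝ) (b g : Fin n → ℝ) :
    {x : Fin d → ℝ |
        ∃ y y' : Fin n → ℝ,
          (∀ i, A.mulVec x i + (1 - P).mulVec y i + b i ≤ 0) ∧
          (∀ i, E.mulVec x i + (1 - P').mulVec y' i + g i = 0)} =
    {x : Fin d → ℝ |
        ∑ i, (A.mulVec x i + b i) ≤ 0 ∧ ∑ i, (E.mulVec x i + g i) = 0} := by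
  have hP := mem_doublyStochastic_of_isSymm hsymm hnonneg hrow
  have hP' := mem_doublyStochastic_of_isSymm hsymm' hnonneg' hrow'
  ext x
  simp only [Set.mem_ofPred_eq, exists_and_left, exists_and_right]
  refine and_congr ?_ ?_
  · simpa only [Pi.add_apply, add_right_comm _ (b _)] using
      exists_forall_add_one_sub_mulVec_nonpos_iff hsymm hP hconn (v := A *ᵥ x + b)
  · simpa only [Pi.add_apply, add_right_comm _ (g _)] using
      exists_forall_add_one_sub_mulVec_eq_zero_iff hsymm' hP' hconn' (v := E *ᵥ x + g)

theorem projection_of_feasible_set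
    {n d : ℕ} (P P' : Matrix (Fin n) (Fin n) ℝ)
    (hsymm : P.IsSymm) (hsymm' : P'.IsSymm)
    (hnonneg : ∀ i j, 0 ≤ P i j) (hnonneg' : ∀ i j, 0 ≤ P' i j)
    (hrow : ∀ i, ∑ j, P i j = 1) (hrow' : ∀ i, ∑ j, P' i j = 1)
    (hdiag : ∀ i, 0 < P i i) (hdiag' : ∀ i, 0 < P' i i)
    (hconn : (assocGraph P).Connected) (hconn' : (assocGraph P').Connected)
    (A E : Matrix (Fin n) (Fin d) ℝ) (b g : Fin n → ℝ) :
    {x : Fin d → ℝ |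
        ∃ y y' : Fin n → ℝ,
          (∀ i, A.mulVec x i + (1 - P).mulVec y i + b i ≤ 0) ∧
          (∀ i, E.mulVec x i + (1 - P').mulVec y' i + g i = 0)} =
    {x : Fin d → ℝ |
        ∑ i, (A.mulVec x i + b i) ≤ 0 ∧ ∑ i, (E.mulVec x i + g i) = 0} :=
  projection_of_feasible_set_general P P' hsymm hsymm' hnonneg hnonneg' hrow hrow' hconn hconn' A E
    b g
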